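/- arXiv:0911.0735 — 2 statements merged into one kernel-verified Lean document; each statement's English description precedes it below -/
import Mathlib

section
/- Let S be a set of m−1 distinct positive half-integers, and let λ^{(0)}, λ^{(1)} be as in the context. Then b(λ^{(1)}, λ^{(0)}) = 0; that is, the sum of sign(w) over all triples (p, T, w) with p ∈ ℤ≥0, T ⊆ Δ1+ and w ∈ W_0 such that ν = λ^{(1)} − Σ_{β∈T} β − 2pδ is regular and ν = w·λ^{(0)} vanishes. (Identity (28) of the paper, stating that the g_0-module multiplicity of L^{(0)}_{λ^{(0)}} in V_{λ^{(1)}} is zero, for k = 2m+1.) -/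
/-!
Combinatorics of weights for the orthosymplectic Lie superalgebra
`osp_{2m+1|2} = B(m,1)` (so `k = 2m+1`, `s = 1/2`), with its distinguished
Borel subalgebra.  A weight is a tuple `λ = (λ₀ | λ₁, …, λ_m) ∈ ℚ^{m+1}`,
encoded as `ℚ × (Fin m → ℚ)` (the index `i : Fin m` stands for the coordinate
`λ_{i+1}`).
-/

open Finset

noncomputable section

abbrev Wt (m : ℕ) := ℚ × (Fin m → ℚ)

def deltaW (m : ℕ) : Wt m := (1, 0)

def epsW {m : ℕ} (i : Fin m) : Wt m := (0, Pi.single i 1)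

/-- The ρ-translated weight `λ̃ = λ + ρ`, with
`ρ = (s−m | m−s, m−1−s, …, 1−s)` and `s = 1/2`. -/
def tilde (m : ℕ) (lam : Wt m) : Wt m :=
  (lam.1 + 1 / 2 - m, fun i => lam.2 i + (m : ℚ) - 1 / 2 - ((i : ℕ) : ℚ))

/-- `λ` is integral: `λ₀ ∈ ℤ` and `λ₁, …, λ_m` all in `ℤ` or all in `1/2 + ℤ`. -/
def Integral (m : ℕ) (lam : Wt m) : Prop :=
  (∃ n : ℤ, lam.1 = (n : ℚ)) ∧
    ((∀ i, ∃ n : ℤ, lam.2 i = (n : ℚ)) ∨ ∀ i, ∃ n : ℤ, lam.2 i = (n : ℚ) + 1 / 2)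

/-- `λ` is `g₀`-dominant: `λ₁ ≥ λ₂ ≥ … ≥ λ_m ≥ 0`. -/
def G0Dom (m : ℕ) (lam : Wt m) : Prop :=
  (∀ i j : Fin m, i ≤ j → lam.2 j ≤ lam.2 i) ∧ ∀ i, 0 ≤ lam.2 i

/-- `λ` is atypical: `|λ̃₀| = λ̃_ℓ` for some `ℓ`. -/
def Atypical (m : ℕ) (lam : Wt m) : Prop :=
  ∃ l : Fin m, |(tilde m lam).1| = (tilde m lam).2 l

/-- The atypicality type `S(λ̄) = {λ̃_i : i ≠ ℓ}` of an atypical `g₀`-dominant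
weight `λ` (where `λ̃_ℓ = |λ̃₀|`). -/
def atypType (m : ℕ) (lam : Wt m) : Finset ℚ :=
  (Finset.univ.image fun i => (tilde m lam).2 i).erase |(tilde m lam).1|

/-- `λ` is `g`-dominant: it is integral, `g₀`-dominant, `λ₀ ∈ ℤ≥0`, and
`λ_j = 0` whenever `j > λ₀`. -/
def GDom (m : ℕ) (lam : Wt m) : Prop :=
  Integral m lam ∧ G0Dom m lam ∧ 0 ≤ lam.1 ∧
    ∀ i : Fin m, lam.1 < ((i : ℕ) : ℚ) + 1 → lam.2 i = 0

/-- `λ^σ = (−λ₀ + 2(m−s) | λ₁, …, λ_m)` with `s = 1/2`. -/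
def sigmaW (m : ℕ) (lam : Wt m) : Wt m := (-lam.1 + 2 * (m : ℚ) - 1, lam.2)

/-- `γ` is the atypical root of `λ`: `γ = δ + ε_ℓ` if `λ̃₀ = λ̃_ℓ`, and
`γ = δ − ε_ℓ` if `λ̃₀ = −λ̃_ℓ`. -/
def AtypRoot (m : ℕ) (lam γ : Wt m) : Prop :=
  ∃ l : Fin m,
    (γ = deltaW m + epsW l ∧ (tilde m lam).1 = (tilde m lam).2 l) ∨
      (γ = deltaW m - epsW l ∧ (tilde m lam).1 = -(tilde m lam).2 l)

/-- `λ` is regular: `|λ̃₁|, …, |λ̃_m|` are pairwise distinct. -/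
def Regular (m : ℕ) (lam : Wt m) : Prop :=
  ∀ i j : Fin m, |(tilde m lam).2 i| = |(tilde m lam).2 j| → i = j

/-- Elements of the Weyl group `W₀` of type `B_m`: signed permutations
(`true` = change sign). -/
abbrev W0T (m : ℕ) := Equiv.Perm (Fin m) × (Fin m → Bool)

/-- The action of `w ∈ W₀` on ρ-translated weights: it fixes the coordinate
`λ̃₀` and signed-permutes `λ̃₁, …, λ̃_m`. -/
def tact (m : ℕ) (w : W0T m) (v : Wt m) : Wt m :=
  (v.1, fun i => (if w.2 i then (-1 : ℚ) else 1) * v.2 (w.1⁻¹ i))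

/-- The signature of `w ∈ W₀`. -/
def sgn (m : ℕ) (w : W0T m) : ℤ :=
  (Equiv.Perm.sign w.1 : ℤ) * ∏ i, (if w.2 i then (-1 : ℤ) else 1)

/-- `ν` is `W₀`-dot-conjugate to `λ`, i.e. `ν = w·λ = w(λ+ρ) − ρ` for some
`w ∈ W₀`. -/
def DotConj (m : ℕ) (lam nu : Wt m) : Prop :=
  ∃ w : W0T m, tilde m nu = tact m w (tilde m lam)

/-- `ν = λ⁺`: `ν` is the (unique) `g₀`-dominant `W₀`-dot-conjugate of `λ`. -/
def IsPlus (m : ℕ) (lam nu : Wt m) : Prop :=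
  G0Dom m nu ∧ DotConj m lam nu

/-- `ν = λˇ = (λ − a₋γ)⁺`, where `γ` is the atypical root of `λ` and `a₋` is
the smallest positive integer with `λ − a₋γ` regular. -/
def IsCheck (m : ℕ) (lam nu : Wt m) : Prop :=
  ∃ γ : Wt m, AtypRoot m lam γ ∧
    ∃ a : ℕ, 0 < a ∧ Regular m (lam - (a : ℚ) • γ) ∧
      (∀ b : ℕ, 0 < b → b < a → ¬Regular m (lam - (b : ℚ) • γ)) ∧
      IsPlus m (lam - (a : ℚ) • γ) nu

/-- `ν = λ^ = (λ + a₊γ)⁺`, where `γ` is the atypical root of `λ` and `a₊` is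
the smallest positive integer with `λ + a₊γ` regular. -/
def IsHat (m : ℕ) (lam nu : Wt m) : Prop :=
  ∃ γ : Wt m, AtypRoot m lam γ ∧
    ∃ a : ℕ, 0 < a ∧ Regular m (lam + (a : ℚ) • γ) ∧
      (∀ b : ℕ, 0 < b → b < a → ¬Regular m (lam + (b : ℚ) • γ)) ∧
      IsPlus m (lam + (a : ℚ) • γ) nu

/-- The set of positive odd roots `Δ₁⁺ = {δ} ∪ {δ ± εᵢ}` (for `k = 2m+1`). -/
def Delta1 (m : ℕ) : Finset (Wt m) :=
  {deltaW m} ∪ (Finset.univ.image fun i : Fin m => deltaW m + epsW i) ∪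
    (Finset.univ.image fun i : Fin m => deltaW m - epsW i)

/- The multiplicity `b(λ, μ)`: the sum of `sign(w)` over all triples
`(p, T, w)` with `p ∈ ℤ≥0`, `T ⊆ Δ₁⁺`, `w ∈ W₀` such that
`ν = λ − Σ_{β∈T} β − 2pδ` is regular and `ν = w·μ`.  (Only finitely many `p`
contribute, so the outer `finsum` is the genuine finite sum.) -/
open Classical in
def bmult (m : ℕ) (lam mu : Wt m) : ℤ :=
  ∑ᶠ p : ℕ, ∑ T ∈ (Delta1 m).powerset, ∑ w : W0T m,
    if Regular m (lam - T.sum id - ((2 * p : ℕ) : ℚ) • deltaW m) ∧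
        tilde m (lam - T.sum id - ((2 * p : ℕ) : ℚ) • deltaW m) =
          tact m w (tilde m mu)
      then sgn m w else 0

/-!
Write `λ̃⁰ = (-a | c)` with `a = n + 1/2`. The atypical root of `λ⁰` is `γ = δ - ε_ℓ` with
`c_ℓ = a`; moving along `γ` first reaches a regular weight at `a₊ = 2n + 1`, and its dominant
conjugate is `λ̃¹ = (a | c)`. A triple `(p, T, w)` then counts exactly when
`λ̃¹ - ΣT - 2pδ = w λ̃⁰` (regularity is automatic), which forces `|T| + 2p = 2n + 1`.

These triples cancel under a sign-reversing involution. Let `pos j` be the index with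
`c (pos j) = j + 1/2` (`j ≤ n`) and `K` the least `j` with `δ - ε_{pos j} ∉ T`; counting gives
`K ≤ n`. If `K > 0`, exchanging `δ + ε_{pos (K-1)}` and `δ + ε_{pos K}` in `T` transposes two
coordinates of `ν̃`, because `c (pos (K-1)) + 1 = c (pos K)`. If `K = 0`, a parity count shows
that exactly one of `δ`, `δ + ε_{pos 0}` lies in `T`, and exchanging them negates
`ν̃_{pos 0} = ±1/2`. The roots `δ - εᵢ` are never moved, so `K` is unchanged and the map is an
involution; `w` changes by a reflection, so its sign flips.
-/

namespace Osp

variable {m : ℕ}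

def flipW (i : Fin m) (w : W0T m) : W0T m := (w.1, Function.update w.2 i (!w.2 i))

def swapW (i j : Fin m) (w : W0T m) : W0T m := (Equiv.swap i j * w.1, w.2 ∘ Equiv.swap i j)

lemma tact_flipW (i : Fin m) (w : W0T m) (v : Wt m) :
    tact m (flipW i w) v =
      ((tact m w v).1, Function.update (tact m w v).2 i (-(tact m w v).2 i)) := by
  refine Prod.ext rfl (funext fun k => ?_)
  by_cases hk : k = i
  · subst hk; cases h : w.2 k <;> simp [tact, flipW, h]
  · simp [tact, flipW, hk]

lemma tact_swapW (i j : Fin m) (w : W0T m) (v : Wt m) :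
    tact m (swapW i j w) v = ((tact m w v).1, (tact m w v).2 ∘ Equiv.swap i j) := by
  refine Prod.ext rfl (funext fun k => ?_)
  simp only [tact, swapW, mul_inv_rev, Equiv.swap_inv, Equiv.Perm.mul_apply, Function.comp_apply]
  rfl

lemma sgn_flipW (i : Fin m) (w : W0T m) : sgn m (flipW i w) = -sgn m w := by
  have hrest : ∏ k ∈ univ.erase i, (if (flipW i w).2 k then (-1 : ℤ) else 1) =
      ∏ k ∈ univ.erase i, (if w.2 k then (-1 : ℤ) else 1) :=
    Finset.prod_congr rfl fun k hk => by simp [flipW, Finset.ne_of_mem_erase hk]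
  rw [sgn, sgn, ← Finset.mul_prod_erase _ _ (mem_univ i), hrest,
    ← Finset.mul_prod_erase _ _ (mem_univ i)]
  cases h : w.2 i <;> simp [flipW, h]

lemma sgn_swapW {i j : Fin m} (h : i ≠ j) (w : W0T m) : sgn m (swapW i j w) = -sgn m w := by
  rw [sgn, sgn, swapW, Equiv.Perm.sign_mul, Equiv.Perm.sign_swap h]
  simp only [Function.comp_apply]
  rw [Equiv.prod_comp (Equiv.swap i j) fun k => if w.2 k then (-1 : ℤ) else 1]
  push_cast
  ring

lemma flipW_flipW (i : Fin m) (w : W0T m) : flipW i (flipW i w) = w := by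
  simp [flipW]

lemma swapW_swapW (i j : Fin m) (w : W0T m) : swapW i j (swapW i j w) = w := by
  refine Prod.ext ?_ (funext fun k => ?_) <;> simp [swapW, ← mul_assoc]

lemma abs_tact_snd (w : W0T m) (v : Wt m) (i : Fin m) :
    |(tact m w v).2 i| = |v.2 (w.1⁻¹ i)| := by
  cases h : w.2 i <;> simp [tact, h]

lemma regular_of_tilde_eq_tact {mu nu : Wt m} {w : W0T m} (hmu : Regular m mu)
    (h : tilde m nu = tact m w (tilde m mu)) : Regular m nu := by
  intro i j hij
  rw [h, abs_tact_snd, abs_tact_snd] at hij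
  exact w.1⁻¹.injective (hmu _ _ hij)

abbrev OddIdx (m : ℕ) := Option (Fin m ⊕ Fin m)

/-- An enumeration of `Δ₁⁺`; subsets `T ⊆ Δ₁⁺` are handled as finsets of indices. -/
def oddRoot : OddIdx m → Wt m
  | none => deltaW m
  | some (.inl i) => deltaW m + epsW i
  | some (.inr i) => deltaW m - epsW i

lemma oddRoot_fst (x : OddIdx m) : (oddRoot x).1 = 1 := by
  rcases x with _ | i | i <;> simp [oddRoot, deltaW, epsW]

lemma oddRoot_snd (x : OddIdx m) (i : Fin m) :
    (oddRoot x).2 i =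
      (if x = some (.inl i) then 1 else 0) - (if x = some (.inr i) then 1 else 0) := by
  rcases x with _ | j | j <;> simp [oddRoot, deltaW, epsW, Pi.single_apply, eq_comm]

lemma oddRoot_injective : Function.Injective (oddRoot (m := m)) := by
  intro x y h
  have key : ∀ i, (oddRoot x).2 i = (oddRoot y).2 i := fun i => by rw [h]
  rcases x with _ | i | i <;> rcases y with _ | j | j <;>
    first
    | rfl
    | (have := key i; simp only [oddRoot_snd] at this; grind)
    | (have := key j; simp only [oddRoot_snd] at this; grind)

lemma delta1_eq_image : Delta1 m = univ.image oddRoot := by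
  ext β
  simp only [Delta1, mem_union, mem_singleton, mem_image, mem_univ, true_and]
  constructor
  · rintro ((h | ⟨i, h⟩) | ⟨i, h⟩)
    exacts [⟨none, h.symm⟩, ⟨some (.inl i), h⟩, ⟨some (.inr i), h⟩]
  · rintro ⟨(_ | i | i), rfl⟩ <;> simp [oddRoot]

lemma sum_oddRoot_fst (U : Finset (OddIdx m)) : (U.sum oddRoot).1 = U.card := by
  simp [Prod.fst_sum, oddRoot_fst]

lemma sum_oddRoot_snd (U : Finset (OddIdx m)) (i : Fin m) :
    (U.sum oddRoot).2 i =
      (if some (.inl i) ∈ U then 1 else 0) - (if some (.inr i) ∈ U then 1 else 0) := by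
  simp only [Prod.snd_sum, Finset.sum_apply, oddRoot_snd, Finset.sum_sub_distrib,
    Finset.sum_ite_eq']

lemma tilde_sub (x v : Wt m) : tilde m (x - v) = tilde m x - v := by
  refine Prod.ext ?_ (funext fun i => ?_) <;> simp only [tilde, Prod.fst_sub, Prod.snd_sub,
    Pi.sub_apply] <;> ring

lemma tilde_add (x v : Wt m) : tilde m (x + v) = tilde m x + v := by
  simpa using tilde_sub x (-v)

lemma bmult_eq_of_regular {lam mu : Wt m} (hmu : Regular m mu) :
    bmult m lam mu = ∑ᶠ p : ℕ, ∑ U : Finset (OddIdx m), ∑ w : W0T m,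
      if tilde m lam - U.sum oddRoot - ((2 * p : ℕ) : ℚ) • deltaW m = tact m w (tilde m mu)
      then sgn m w else 0 := by
  classical
  refine finsum_congr fun p => ?_
  rw [delta1_eq_image, powerset_image, powerset_univ,
    sum_image fun U _ V _ h => image_injective oddRoot_injective h]
  refine sum_congr rfl fun U _ => sum_congr rfl fun w _ => ?_
  rw [sum_image fun x _ y _ h => oddRoot_injective h, tilde_sub, tilde_sub]
  exact if_congr (and_iff_right_of_imp fun h => regular_of_tilde_eq_tact hmu
    (by rwa [tilde_sub, tilde_sub])) rfl rfl

section Involution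

variable (n : ℕ) (c : Fin m → ℚ)

def nuTilde (p : ℕ) (U : Finset (OddIdx m)) : Wt m :=
  ((n : ℚ) + 1 / 2, c) - U.sum oddRoot - ((2 * p : ℕ) : ℚ) • deltaW m

/-- `(p, U, w)` is one of the triples counted by `b(λ, μ)` when `λ̃ = (n + 1/2 | c)` and
`μ̃ = (-(n + 1/2) | c)`. -/
def Contributes (p : ℕ) (x : Finset (OddIdx m) × W0T m) : Prop :=
  nuTilde n c p x.1 = tact m x.2 (-((n : ℚ) + 1 / 2), c)

variable {n c}

lemma pos_of_forall_half (hhalf : ∀ i, ∃ k : ℕ, c i = k + 1 / 2) (i : Fin m) : 0 < c i := by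
  obtain ⟨k, hk⟩ := hhalf i
  rw [hk]
  positivity

lemma nuTilde_fst (p : ℕ) (U : Finset (OddIdx m)) :
    (nuTilde n c p U).1 = n + 1 / 2 - U.card - 2 * p := by
  simp [nuTilde, sum_oddRoot_fst, deltaW]

lemma nuTilde_snd (p : ℕ) (U : Finset (OddIdx m)) (i : Fin m) :
    (nuTilde n c p U).2 i =
      c i - (if some (.inl i) ∈ U then 1 else 0) + (if some (.inr i) ∈ U then 1 else 0) := by
  simp [nuTilde, sum_oddRoot_snd, deltaW]
  ring

lemma Contributes.card_add {p : ℕ} {x : Finset (OddIdx m) × W0T m}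
    (h : Contributes n c p x) : x.1.card + 2 * p = 2 * n + 1 := by
  have h1 := congrArg Prod.fst h
  rw [nuTilde_fst] at h1
  simp only [tact] at h1
  exact_mod_cast (by linarith : (x.1.card : ℚ) + 2 * p = 2 * n + 1)

lemma Contributes.abs_nuTilde_snd {p : ℕ} {x : Finset (OddIdx m) × W0T m}
    (hcpos : ∀ i, 0 < c i) (h : Contributes n c p x) (i : Fin m) :
    |(nuTilde n c p x.1).2 i| = c (x.2.1⁻¹ i) := by
  rw [h, abs_tact_snd, abs_of_pos (hcpos _)]

lemma card_eq_ite_add_card_filter {α β : Type*} [Fintype α] [Fintype β] [DecidableEq α]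
    [DecidableEq β] (U : Finset (Option (α ⊕ β))) :
    U.card = (if none ∈ U then 1 else 0) + #{i | some (.inl i) ∈ U} + #{j | some (.inr j) ∈ U} := by
  rw [← Finset.filter_univ_mem U, Finset.card_filter, Fintype.sum_option, Fintype.sum_sum_type]
  simp [Finset.sum_boole, add_assoc]

lemma abs_sub_nuTilde_snd (hc : Function.Injective c) (hhalf : ∀ i, ∃ k : ℕ, c i = k + 1 / 2)
    {q : Fin m} (hq : c q = 1 / 2) (p : ℕ) (U : Finset (OddIdx m)) (i : Fin m) :
    |(nuTilde n c p U).2 i| - (nuTilde n c p U).2 i =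
      if i = q ∧ some (.inl i) ∈ U ∧ some (.inr i) ∉ U then 1 else 0 := by
  obtain ⟨k, hk⟩ := hhalf i
  have hk0 : (0 : ℚ) ≤ k := k.cast_nonneg
  rw [nuTilde_snd]
  by_cases hi : i = q
  · subst hi
    obtain rfl : k = 0 := by exact_mod_cast (by linarith : (k : ℚ) = 0)
    split_ifs <;> simp_all [abs_of_nonneg] <;> norm_num
  · have hk1 : (1 : ℚ) ≤ k := by
      rcases Nat.eq_zero_or_pos k with rfl | hpos
      · exact absurd (hc (by rw [hk, hq]; norm_num)) hi
      · exact_mod_cast hpos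
    simp only [hi, false_and, if_false]
    rw [abs_of_nonneg (by split_ifs <;> linarith), sub_self]

lemma Contributes.card_filter_inl (hc : Function.Injective c)
    (hhalf : ∀ i, ∃ k : ℕ, c i = k + 1 / 2)
    {q : Fin m} (hq : c q = 1 / 2) {p : ℕ} {x : Finset (OddIdx m) × W0T m}
    (h : Contributes n c p x) :
    #{i | some (.inl i) ∈ x.1} =
      #{i | some (.inr i) ∈ x.1} + if some (.inl q) ∈ x.1 ∧ some (.inr q) ∉ x.1 then 1 else 0 := by
  have hsum_abs : ∑ i, |(nuTilde n c p x.1).2 i| = ∑ i, c i := by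
    simp only [h.abs_nuTilde_snd (pos_of_forall_half hhalf)]
    exact Equiv.sum_comp x.2.1⁻¹ c
  have hsum : ∑ i, (nuTilde n c p x.1).2 i =
      ∑ i, c i - #{i | some (.inl i) ∈ x.1} + #{i | some (.inr i) ∈ x.1} := by
    simp only [nuTilde_snd, Finset.sum_add_distrib, Finset.sum_sub_distrib, Finset.sum_boole]
  have hdefect : ∑ i, (|(nuTilde n c p x.1).2 i| - (nuTilde n c p x.1).2 i) =
      ((if some (.inl q) ∈ x.1 ∧ some (.inr q) ∉ x.1 then 1 else 0 : ℕ) : ℚ) := by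
    rw [Finset.sum_congr rfl fun i _ => abs_sub_nuTilde_snd hc hhalf hq p x.1 i]
    rw [Finset.sum_eq_single_of_mem q (mem_univ q) fun i _ hi => if_neg fun h => hi h.1]
    simp
  rw [Finset.sum_sub_distrib, hsum_abs, hsum] at hdefect
  qify
  push_cast at hdefect ⊢
  linarith

lemma Contributes.count_eq (hc : Function.Injective c) (hhalf : ∀ i, ∃ k : ℕ, c i = k + 1 / 2)
    {q : Fin m} (hq : c q = 1 / 2) {p : ℕ} {x : Finset (OddIdx m) × W0T m}
    (h : Contributes n c p x) :
    (if none ∈ x.1 then 1 else 0) + 2 * #{i | some (.inr i) ∈ x.1} +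
      (if some (.inl q) ∈ x.1 ∧ some (.inr q) ∉ x.1 then 1 else 0) + 2 * p = 2 * n + 1 := by
  have := h.card_add
  rw [card_eq_ite_add_card_filter, h.card_filter_inl hc hhalf hq] at this
  omega

lemma nuTilde_map_swap_inl {p : ℕ} {U : Finset (OddIdx m)} {i j : Fin m}
    (h : c i + (if some (.inr i) ∈ U then 1 else 0) = c j + (if some (.inr j) ∈ U then 1 else 0)) :
    nuTilde n c p (U.map (Equiv.swap (some (.inl i)) (some (.inl j))).toEmbedding) =
      ((nuTilde n c p U).1, (nuTilde n c p U).2 ∘ Equiv.swap i j) := by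
  have hinl : Function.Injective fun k : Fin m => (some (.inl k) : OddIdx m) :=
    (Option.some_injective _).comp Sum.inl_injective
  have hinr (k : Fin m) : Equiv.swap (some (Sum.inl i)) (some (Sum.inl j)) (some (Sum.inr k)) =
      some (.inr k) := Equiv.swap_apply_of_ne_of_ne (by simp) (by simp)
  refine Prod.ext (by simp [nuTilde_fst]) (funext fun k => ?_)
  simp only [nuTilde_snd, Finset.mem_map_equiv, Equiv.symm_swap, Function.comp_apply,
    hinl.swap_apply, hinr]
  rcases eq_or_ne k i with rfl | hki
  · rw [Equiv.swap_apply_left]; linarith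
  rcases eq_or_ne k j with rfl | hkj
  · rw [Equiv.swap_apply_right]; linarith
  · rw [Equiv.swap_apply_of_ne_of_ne hki hkj]

lemma nuTilde_map_swap_none {p : ℕ} {U : Finset (OddIdx m)} {q : Fin m}
    (hq : c q = 1 / 2) (hqU : some (.inr q) ∉ U) (hxor : none ∈ U ↔ some (.inl q) ∉ U) :
    nuTilde n c p (U.map (Equiv.swap none (some (.inl q))).toEmbedding) =
      ((nuTilde n c p U).1, Function.update (nuTilde n c p U).2 q (-(nuTilde n c p U).2 q)) := by
  have hinr (k : Fin m) :
      Equiv.swap none (some (Sum.inl q)) (some (Sum.inr k)) = some (Sum.inr k) :=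
    Equiv.swap_apply_of_ne_of_ne (by simp) (by simp)
  refine Prod.ext (by simp [nuTilde_fst]) (funext fun k => ?_)
  simp only [nuTilde_snd, Finset.mem_map_equiv, Equiv.symm_swap, hinr]
  rcases eq_or_ne k q with rfl | hkq
  · simp only [Equiv.swap_apply_right, Function.update_self, hq, hqU]
    by_cases hn : none ∈ U <;> simp_all <;> norm_num
  · rw [Function.update_of_ne hkq, nuTilde_snd,
      Equiv.swap_apply_of_ne_of_ne (by simp) (by simpa using hkq)]

def firstGap (n : ℕ) (pos : ℕ → Fin m) (U : Finset (OddIdx m)) : ℕ :=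
  Nat.find (⟨n + 1, Or.inl n.lt_succ_self⟩ : ∃ j, n < j ∨ some (Sum.inr (pos j)) ∉ U)

def exchange (pos : ℕ → Fin m) (K : ℕ) (x : Finset (OddIdx m) × W0T m) :
    Finset (OddIdx m) × W0T m :=
  if K = 0 then
    (x.1.map (Equiv.swap none (some (Sum.inl (pos 0)))).toEmbedding, flipW (pos 0) x.2)
  else
    (x.1.map (Equiv.swap (some (Sum.inl (pos (K - 1)))) (some (Sum.inl (pos K)))).toEmbedding,
      swapW (pos (K - 1)) (pos K) x.2)

variable {pos : ℕ → Fin m}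

lemma inr_mem_exchange_iff {K : ℕ} {x : Finset (OddIdx m) × W0T m} {j : Fin m} :
    some (Sum.inr j) ∈ (exchange pos K x).1 ↔ some (Sum.inr j) ∈ x.1 := by
  unfold exchange
  split_ifs <;>
    rw [Finset.mem_map_equiv, Equiv.symm_swap, Equiv.swap_apply_of_ne_of_ne (by simp) (by simp)]

lemma firstGap_exchange (K : ℕ) (x : Finset (OddIdx m) × W0T m) :
    firstGap n pos (exchange pos K x).1 = firstGap n pos x.1 := by
  simp only [firstGap, inr_mem_exchange_iff]

lemma exchange_exchange (K : ℕ) (x : Finset (OddIdx m) × W0T m) :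
    exchange pos K (exchange pos K x) = x := by
  unfold exchange
  split_ifs <;> ext <;> simp [flipW_flipW, swapW_swapW, Finset.mem_map_equiv]

lemma inr_notMem_of_firstGap_le {U : Finset (OddIdx m)}
    (h : firstGap n pos U ≤ n) : some (Sum.inr (pos (firstGap n pos U))) ∉ U :=
  (Nat.find_spec (⟨n + 1, Or.inl n.lt_succ_self⟩ : ∃ j, n < j ∨ some (Sum.inr (pos j)) ∉ U)
    ).resolve_left h.not_gt

lemma inr_mem_of_lt_firstGap {U : Finset (OddIdx m)} {j : ℕ}
    (h : j < firstGap n pos U) : some (Sum.inr (pos j)) ∈ U := by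
  have := Nat.find_min _ h
  simp only [not_or, not_not] at this
  exact this.2

lemma Contributes.firstGap_le (hc : Function.Injective c)
    (hhalf : ∀ i, ∃ k : ℕ, c i = k + 1 / 2)
    (hpos : ∀ j ≤ n, c (pos j) = j + 1 / 2) {p : ℕ}
    {x : Finset (OddIdx m) × W0T m} (h : Contributes n c p x) :
    firstGap n pos x.1 ≤ n := by
  by_contra! hgap
  have hsub : (range (n + 1)).image pos ⊆ ({i | some (Sum.inr i) ∈ x.1} : Finset (Fin m)) := by
    simp only [Finset.subset_iff, mem_image, mem_range, mem_filter, mem_univ, true_and]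
    rintro _ ⟨j, hj, rfl⟩
    exact inr_mem_of_lt_firstGap (n := n) (by omega)
  have hinj : Set.InjOn pos (range (n + 1)) := fun j hj k hk hjk => by
    have := congrArg c hjk
    rw [hpos j (by simp at hj; omega), hpos k (by simp at hk; omega)] at this
    exact_mod_cast (by linarith : (j : ℚ) = k)
  have hcard := Finset.card_le_card hsub
  rw [Finset.card_image_of_injOn hinj, card_range] at hcard
  have := h.count_eq hc hhalf (by simpa using hpos 0 n.zero_le)
  split_ifs at this <;> omega

lemma Contributes.exchange_firstGap (hc : Function.Injective c)
    (hhalf : ∀ i, ∃ k : ℕ, c i = k + 1 / 2)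
    (hpos : ∀ j ≤ n, c (pos j) = j + 1 / 2) {p : ℕ}
    {x : Finset (OddIdx m) × W0T m} (h : Contributes n c p x) :
    Contributes n c p (exchange pos (firstGap n pos x.1) x) ∧
      sgn m (exchange pos (firstGap n pos x.1) x).2 = -sgn m x.2 := by
  have hK := h.firstGap_le hc hhalf hpos
  have hgap := inr_notMem_of_firstGap_le hK
  have hpos0 : c (pos 0) = 1 / 2 := by simpa using hpos 0 n.zero_le
  have hcount := h.count_eq hc hhalf hpos0
  unfold Contributes at h ⊢
  rcases Nat.eq_zero_or_pos (firstGap n pos x.1) with hK0 | hK0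
  · rw [hK0] at hgap
    have hxor : none ∈ x.1 ↔ some (Sum.inl (pos 0)) ∉ x.1 := by
      by_cases h1 : none ∈ x.1 <;> by_cases h2 : some (Sum.inl (pos 0)) ∈ x.1 <;>
        simp [h1, h2, hgap] at hcount ⊢ <;> omega
    rw [exchange, if_pos hK0]
    exact ⟨by rw [nuTilde_map_swap_none hpos0 hgap hxor, h, tact_flipW], sgn_flipW _ _⟩
  · set K := firstGap n pos x.1
    have hprev := hpos (K - 1) (by omega)
    have hcur := hpos K hK
    have hK1 : ((K - 1 : ℕ) : ℚ) = K - 1 := by rw [Nat.cast_sub hK0]; simp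
    have hne : pos (K - 1) ≠ pos K := fun heq => by
      rw [heq, hcur, hK1] at hprev; linarith
    have hlevel : c (pos (K - 1)) + (if some (Sum.inr (pos (K - 1))) ∈ x.1 then 1 else 0) =
        c (pos K) + (if some (Sum.inr (pos K)) ∈ x.1 then 1 else 0) := by
      rw [if_pos (inr_mem_of_lt_firstGap (n := n) (by omega)), if_neg hgap, hprev, hcur, hK1]
      ring
    rw [exchange, if_neg hK0.ne']
    exact ⟨by rw [nuTilde_map_swap_inl hlevel, h, tact_swapW], sgn_swapW hne _⟩

open Classical in
theorem sum_sgn_contributes_eq_zero (hc : Function.Injective c)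
    (hhalf : ∀ i, ∃ k : ℕ, c i = k + 1 / 2) (hpos : ∀ j ≤ n, c (pos j) = j + 1 / 2) (p : ℕ) :
    ∑ x : Finset (OddIdx m) × W0T m, (if Contributes n c p x then sgn m x.2 else 0) = 0 := by
  have hinv (x : Finset (OddIdx m) × W0T m) :
      exchange pos (firstGap n pos (exchange pos (firstGap n pos x.1) x).1)
        (exchange pos (firstGap n pos x.1) x) = x := by
    rw [firstGap_exchange, exchange_exchange]
  refine Finset.sum_involution (fun x _ => exchange pos (firstGap n pos x.1) x) (fun x _ => ?_)
    (fun x _ hne heq => ?_) (fun _ _ => mem_univ _) (fun x _ => hinv x)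
  · by_cases hx : Contributes n c p x
    · obtain ⟨hx', hsgn⟩ := hx.exchange_firstGap hc hhalf hpos
      rw [if_pos hx, if_pos hx', hsgn, add_neg_cancel]
    · have hx' : ¬Contributes n c p (exchange pos (firstGap n pos x.1) x) := fun hv => by
        have := (hv.exchange_firstGap hc hhalf hpos).1
        rw [hinv] at this
        exact hx this
      rw [if_neg hx, if_neg hx', add_zero]
  · have hx : Contributes n c p x := by by_contra hx; simp [hx] at hne
    rw [if_pos hx] at hne
    have := (hx.exchange_firstGap hc hhalf hpos).2
    rw [heq] at this
    omega

end Involution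

section Hat

lemma strictAnti_tilde_snd_of_g0Dom {lam : Wt m} (h : G0Dom m lam) : StrictAnti (tilde m lam).2 :=
  fun i j hij => by
    have := h.1 i j hij.le
    have : ((i : ℕ) : ℚ) < (j : ℕ) := by exact_mod_cast hij
    simp only [tilde]
    linarith

lemma tilde_snd_pos_of_g0Dom {lam : Wt m} (h : G0Dom m lam) (i : Fin m) :
    0 < (tilde m lam).2 i := by
  have := h.2 i
  have : ((i : ℕ) : ℚ) + 1 ≤ m := by exact_mod_cast i.isLt
  simp only [tilde]
  linarith

lemma tilde_snd_eq_of_isPlus {mu lam : Wt m} {c : Fin m → ℚ} (hc : StrictAnti c)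
    (habs : ∀ i, |(tilde m mu).2 i| = c i) (h : IsPlus m mu lam) : (tilde m lam).2 = c := by
  obtain ⟨hdom, w, hw⟩ := h
  have hval : (tilde m lam).2 = c ∘ ⇑w.1⁻¹ := funext fun i => by
    rw [Function.comp_apply, ← habs, ← abs_tact_snd, ← hw,
      abs_of_pos (tilde_snd_pos_of_g0Dom hdom i)]
  refine ((strictAnti_tilde_snd_of_g0Dom hdom).range_inj hc).1 ?_
  rw [hval, Set.range_comp, (w.1⁻¹).surjective.range_eq, Set.image_univ]

lemma tilde_add_smul_delta_sub_eps (lam : Wt m) (t : ℚ) (l : Fin m) :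
    tilde m (lam + t • (deltaW m - epsW l)) =
      ((tilde m lam).1 + t, Function.update (tilde m lam).2 l ((tilde m lam).2 l - t)) := by
  rw [tilde_add]
  refine Prod.ext (by simp [deltaW, epsW]) (funext fun i => ?_)
  by_cases hi : i = l
  · subst hi; simp [deltaW, epsW, sub_eq_add_neg]
  · simp [deltaW, epsW, hi]

lemma regular_of_abs_tilde_snd {mu : Wt m} {c : Fin m → ℚ} (hc : Function.Injective c)
    (habs : ∀ i, |(tilde m mu).2 i| = c i) : Regular m mu := fun i j hij =>
  hc (by rwa [habs, habs] at hij)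

variable {n : ℕ} {c : Fin m → ℚ} {lam0 : Wt m}

lemma atypRoot_eq_delta_sub_eps (hcpos : ∀ i, 0 < c i)
    (h0 : tilde m lam0 = (-((n : ℚ) + 1 / 2), c)) {γ : Wt m} (hγ : AtypRoot m lam0 γ) :
    ∃ l, γ = deltaW m - epsW l ∧ c l = n + 1 / 2 := by
  obtain ⟨l, ⟨-, hl⟩ | ⟨hγ, hl⟩⟩ := hγ <;> rw [h0] at hl
  · have := hcpos l
    have : (0 : ℚ) ≤ n := n.cast_nonneg
    simp only at hl
    linarith
  · exact ⟨l, hγ, by simp only [neg_inj] at hl; exact hl.symm⟩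

lemma not_regular_add_smul_delta_sub_eps {pos : ℕ → Fin m} (hpos : ∀ j ≤ n, c (pos j) = j + 1 / 2)
    (h0 : tilde m lam0 = (-((n : ℚ) + 1 / 2), c)) {l : Fin m} (hl : c l = n + 1 / 2)
    {t : ℕ} (ht0 : 0 < t) (ht : t < 2 * n + 1) :
    ¬Regular m (lam0 + (t : ℚ) • (deltaW m - epsW l)) := by
  obtain ⟨k, hkn, hk⟩ : ∃ k < n, |(n : ℚ) + 1 / 2 - t| = k + 1 / 2 := by
    rcases le_or_gt t n with htn | htn
    · have : (t : ℚ) ≤ n := by exact_mod_cast htn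
      refine ⟨n - t, by omega, ?_⟩
      rw [Nat.cast_sub htn, abs_of_nonneg (by linarith)]
      ring
    · have : (n : ℚ) + 1 ≤ t := by exact_mod_cast htn
      refine ⟨t - (n + 1), by omega, ?_⟩
      rw [Nat.cast_sub htn, abs_of_neg (by linarith)]
      push_cast
      ring
  have hposk := hpos k hkn.le
  have hne : pos k ≠ l := fun h => by
    rw [h, hl] at hposk
    have : (n : ℚ) = k := by linarith
    exact absurd (by exact_mod_cast this : n = k) hkn.ne'
  intro hreg
  refine hne (hreg (pos k) l ?_)
  rw [tilde_add_smul_delta_sub_eps, h0]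
  dsimp only
  simp only [Function.update_self, Function.update_of_ne hne, hl, hk, hposk]
  rw [abs_of_pos (by positivity)]

lemma abs_tilde_snd_add_smul_delta_sub_eps (hcpos : ∀ i, 0 < c i)
    (h0 : tilde m lam0 = (-((n : ℚ) + 1 / 2), c)) {l : Fin m} (hl : c l = n + 1 / 2) (i : Fin m) :
    |(tilde m (lam0 + ((2 * n + 1 : ℕ) : ℚ) • (deltaW m - epsW l))).2 i| = c i := by
  rw [tilde_add_smul_delta_sub_eps, h0]
  dsimp only
  rcases eq_or_ne i l with rfl | hil
  · rw [Function.update_self, show c i - ((2 * n + 1 : ℕ) : ℚ) = -c i by push_cast; linarith,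
      abs_neg, abs_of_pos (hcpos i)]
  · rw [Function.update_of_ne hil, abs_of_pos (hcpos i)]

lemma tilde_eq_of_isHat (hc : StrictAnti c) (hhalf : ∀ i, ∃ k : ℕ, c i = k + 1 / 2)
    {pos : ℕ → Fin m} (hpos : ∀ j ≤ n, c (pos j) = j + 1 / 2)
    (h0 : tilde m lam0 = (-((n : ℚ) + 1 / 2), c)) {lam1 : Wt m} (hhat : IsHat m lam0 lam1) :
    tilde m lam1 = ((n : ℚ) + 1 / 2, c) := by
  have hcpos := pos_of_forall_half hhalf
  obtain ⟨γ, hγ, t, ht0, hreg, hmin, hplus⟩ := hhat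
  obtain ⟨l, rfl, hl⟩ := atypRoot_eq_delta_sub_eps hcpos h0 hγ
  have habs := abs_tilde_snd_add_smul_delta_sub_eps hcpos h0 hl
  obtain rfl : t = 2 * n + 1 := by
    rcases lt_trichotomy t (2 * n + 1) with h | h | h
    · exact absurd hreg (not_regular_add_smul_delta_sub_eps hpos h0 hl ht0 h)
    · exact h
    · exact absurd (regular_of_abs_tilde_snd hc.injective habs) (hmin _ (by omega) h)
  refine Prod.ext ?_ (tilde_snd_eq_of_isPlus hc habs hplus)
  obtain ⟨-, w, hw⟩ := hplus
  rw [hw, tact, tilde_add_smul_delta_sub_eps, h0]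
  push_cast
  ring

end Hat

section Values

variable {S : Finset ℚ} {c : Fin m → ℚ} {n : ℕ}

lemma forall_half_of_image_eq (hS : ∀ x ∈ S, ∃ k : ℕ, x = k + 1 / 2)
    (h : univ.image c = insert ((n : ℚ) + 1 / 2) S) (i : Fin m) : ∃ k : ℕ, c i = k + 1 / 2 := by
  have hi : c i ∈ insert ((n : ℚ) + 1 / 2) S := h ▸ mem_image_of_mem c (mem_univ i)
  rcases mem_insert.1 hi with hi | hi
  exacts [⟨n, hi⟩, hS _ hi]

lemma exists_eq_half_of_le (hmin : ∀ b : ℚ, (∃ k : ℕ, b = k + 1 / 2) → b ∉ S → (n : ℚ) + 1 / 2 ≤ b)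
    (h : univ.image c = insert ((n : ℚ) + 1 / 2) S) {j : ℕ} (hj : j ≤ n) :
    ∃ i, c i = j + 1 / 2 := by
  suffices (j : ℚ) + 1 / 2 ∈ univ.image c by simpa using this
  rw [h]
  rcases hj.lt_or_eq with hj | rfl
  · refine mem_insert_of_mem (by_contra fun hjS => ?_)
    have := hmin _ ⟨j, rfl⟩ hjS
    have : (j : ℚ) < n := by exact_mod_cast hj
    linarith
  · exact mem_insert_self _ _

end Values

end Osp

open Osp in
theorem bmult_lambda1_lambda0_eq_zero_general (m : ℕ)
    (S : Finset ℚ)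
    (hS : ∀ x ∈ S, ∃ n : ℕ, x = (n : ℚ) + 1 / 2)
    (a : ℚ) (ha : ∃ n : ℕ, a = (n : ℚ) + 1 / 2)
    (hmin : ∀ b : ℚ, (∃ n : ℕ, b = (n : ℚ) + 1 / 2) → b ∉ S → a ≤ b)
    (lam0 lam1 : Wt m)
    (h1 : (tilde m lam0).1 = -a)
    (h2 : (Finset.univ.image fun i => (tilde m lam0).2 i) = insert a S)
    (h3 : ∀ i j : Fin m, i < j → (tilde m lam0).2 j < (tilde m lam0).2 i)
    (hhat : IsHat m lam0 lam1) :
    bmult m lam1 lam0 = 0 := by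
  obtain ⟨n, rfl⟩ := ha
  set c := (tilde m lam0).2
  have hc : StrictAnti c := h3
  have hhalf := forall_half_of_image_eq hS h2
  have hlow : ∀ j ≤ n, ∃ i, c i = j + 1 / 2 := fun j => exists_eq_half_of_le hmin h2
  have : Nonempty (Fin m) := ⟨(hlow 0 n.zero_le).choose⟩
  choose! pos hpos using hlow
  have h0 : tilde m lam0 = (-((n : ℚ) + 1 / 2), c) := Prod.ext h1 rfl
  have hreg0 : Regular m lam0 :=
    regular_of_abs_tilde_snd hc.injective fun i => abs_of_pos (pos_of_forall_half hhalf i)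
  rw [bmult_eq_of_regular hreg0, tilde_eq_of_isHat hc hhalf hpos h0 hhat, h0]
  convert finsum_zero with p
  rw [← Fintype.sum_prod_type']
  convert sum_sgn_contributes_eq_zero hc.injective hhalf hpos p using 3
  exact Iff.rfl

/-- identity (28) of the paper for `k = 2m+1`:
`b(λ⁽¹⁾, λ⁽⁰⁾) = 0`, where `λ⁽⁰⁾` is the weight with
`λ̃⁽⁰⁾ = (−a | the elements of S ∪ {a} in decreasing order)` (with `a` the
smallest positive half-integer not in `S`) and `λ⁽¹⁾ = (λ⁽⁰⁾)^`. -/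
theorem bmult_lambda1_lambda0_eq_zero (m : ℕ) (hm : 1 ≤ m)
    (S : Finset ℚ) (hcard : S.card = m - 1)
    (hS : ∀ x ∈ S, ∃ n : ℕ, x = (n : ℚ) + 1 / 2)
    (a : ℚ) (ha : ∃ n : ℕ, a = (n : ℚ) + 1 / 2) (haS : a ∉ S)
    (hmin : ∀ b : ℚ, (∃ n : ℕ, b = (n : ℚ) + 1 / 2) → b ∉ S → a ≤ b)
    (lam0 lam1 : Wt m)
    (h1 : (tilde m lam0).1 = -a)
    (h2 : (Finset.univ.image fun i => (tilde m lam0).2 i) = insert a S)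
    (h3 : ∀ i j : Fin m, i < j → (tilde m lam0).2 j < (tilde m lam0).2 i)
    (hhat : IsHat m lam0 lam1) :
    bmult m lam1 lam0 = 0 :=
  bmult_lambda1_lambda0_eq_zero_general m S hS a ha hmin lam0 lam1 h1 h2 h3 hhat

end
end

section
/- Let S be a set of m−1 distinct positive half-integers, and let λ^{(i)} (i ≥ 0) be as in the context. Then b(λ^{(i)}, λ^{(i−1)}) = 1 for every i ≥ 2. (This is the multiplicity computation b_{λ^{(i)},λ^{(i−1)}} = 1 asserted in the proof of Theorem 3.10, for k = 2m+1.) -/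
/-!
Combinatorics of weights for the orthosymplectic Lie superalgebra
`osp_{2m+1|2} = B(m,1)` (so `k = 2m+1`, `s = 1/2`), with its distinguished
Borel subalgebra.  A weight is a tuple `λ = (λ₀ | λ₁, …, λ_m) ∈ ℚ^{m+1}`,
encoded as `ℚ × (Fin m → ℚ)` (the index `i : Fin m` stands for the coordinate
`λ_{i+1}`).
-/

open Finset

noncomputable section

/-!
Every `λ⁽ⁱ⁾` with `i ≥ 1` has `λ̃⁽ⁱ⁾ = (Aᵢ | S ∪ {Aᵢ} in decreasing order)` for a positive
half-integer `Aᵢ ∉ S`. For `λ⁽⁰⁾` the atypical root is `δ − ε_ℓ`, and the hat replaces the entry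
`a` by `|a − a₊|`; from then on the root is `δ + ε_ℓ`, and the hat raises `Aᵢ` to the next
half-integer `Aᵢ₊₁ ∉ S`, so every half-integer strictly between them lies in `S`.

For two such consecutive weights `λ = λ⁽ⁱ⁾`, `μ = λ⁽ⁱ⁻¹⁾` the only triple contributing to
`b(λ, μ)` is `p = 0`, `w = 1`, `T = {δ + εⱼ : Aᵢ₋₁ < λ̃ⱼ ≤ Aᵢ}`. Indeed the `δ`-coordinate gives
`|T| + 2p = Aᵢ − Aᵢ₋₁`, while summing the `ε`-coordinates gives `Aᵢ − Aᵢ₋₁ ≤ Σ_{β ∈ T} Σⱼ βⱼ ≤ |T|`,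
with equality only if `p = 0`, `T ⊆ {δ + εⱼ}` and `w` changes no sign. Then `λ̃ − Σ T` is
injective and (the entries of `λ̃` being half-integers) antitone, hence it is the decreasing
enumeration of `S ∪ {Aᵢ₋₁}`, that is `μ̃`; this pins down both `T` and `w`.
-/

def IsPosHalfInt (x : ℚ) : Prop := ∃ n : ℕ, x = (n : ℚ) + 1 / 2

namespace IsPosHalfInt

variable {x y : ℚ}

lemma pos (hx : IsPosHalfInt x) : 0 < x := by
  obtain ⟨n, rfl⟩ := hx
  positivity

lemma exists_natCast_eq_sub (hx : IsPosHalfInt x) (hy : IsPosHalfInt y) (h : y ≤ x) :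
    ∃ b : ℕ, x - y = b := by
  obtain ⟨n, rfl⟩ := hx
  obtain ⟨k, rfl⟩ := hy
  have hkn : k ≤ n := by exact_mod_cast (by linarith : (k : ℚ) ≤ n)
  exact ⟨n - k, by push_cast [hkn]; ring⟩

lemma add_one_le_of_lt (hx : IsPosHalfInt x) (hy : IsPosHalfInt y) (h : x < y) : x + 1 ≤ y := by
  obtain ⟨b, hb⟩ := hy.exists_natCast_eq_sub hx h.le
  have hb0 : 0 < b := by exact_mod_cast (by linarith : (0 : ℚ) < b)
  have : (1 : ℚ) ≤ b := Nat.one_le_cast.2 hb0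
  linarith

lemma add_natCast (hx : IsPosHalfInt x) (q : ℕ) : IsPosHalfInt (x + q) := by
  obtain ⟨n, rfl⟩ := hx
  exact ⟨n + q, by push_cast; ring⟩

lemma sub_one (hx : IsPosHalfInt x) (h : 1 < x) : IsPosHalfInt (x - 1) := by
  obtain ⟨n, rfl⟩ := hx
  have hn : 0 < n := by exact_mod_cast (by linarith : (0 : ℚ) < n)
  exact ⟨n - 1, by push_cast [hn]; ring⟩

lemma abs_sub_natCast (hx : IsPosHalfInt x) (q : ℕ) : IsPosHalfInt |x - q| := by
  obtain ⟨n, rfl⟩ := hx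
  rcases le_or_gt q n with h | h
  · have h' : (q : ℚ) ≤ n := by exact_mod_cast h
    exact ⟨n - q, by rw [abs_of_pos (by linarith)]; push_cast [h]; ring⟩
  · have h' : (n : ℚ) + 1 ≤ q := by exact_mod_cast h
    refine ⟨q - n - 1, ?_⟩
    rw [abs_of_neg (by linarith), Nat.cast_sub (by omega), Nat.cast_sub h.le]
    push_cast
    ring

end IsPosHalfInt

section DescEnum

variable {α : Type*} [LinearOrder α] {m : ℕ}

def IsDescEnum (s : Finset α) (f : Fin m → α) : Prop :=
  StrictAnti f ∧ Finset.univ.image f = s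

namespace IsDescEnum

variable {s : Finset α} {f g : Fin m → α}

lemma mem (hf : IsDescEnum s f) (j : Fin m) : f j ∈ s :=
  hf.2 ▸ Finset.mem_image_of_mem f (Finset.mem_univ j)

lemma card (hf : IsDescEnum s f) : s.card = m := by
  rw [← hf.2, Finset.card_image_of_injective _ hf.1.injective, Finset.card_univ, Fintype.card_fin]

lemma sum_eq [AddCommMonoid α] (hf : IsDescEnum s f) : ∑ j, f j = ∑ x ∈ s, x := by
  rw [← hf.2, Finset.sum_image fun i _ j _ h => hf.1.injective h]

lemma eq_of_strictAnti (hf : IsDescEnum s f) (hg : StrictAnti g) (hgs : ∀ j, g j ∈ s) :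
    g = f := by
  have hrev : ∀ {h : Fin m → α}, StrictAnti h → StrictMono fun i : Fin m => h i.rev :=
    fun hh i j hij => hh (Fin.rev_lt_rev.2 hij)
  have key := (Finset.orderEmbOfFin_unique hf.card (fun i => hgs i.rev) (hrev hg)).trans
    (Finset.orderEmbOfFin_unique hf.card (fun i => hf.mem i.rev) (hrev hf.1)).symm
  funext j
  simpa using congrFun key j.rev

end IsDescEnum

end DescEnum

section Weights

variable {m : ℕ}

lemma tilde_add (lam v : Wt m) : tilde m (lam + v) = tilde m lam + v := by
  ext <;> simp only [tilde, Prod.fst_add, Prod.snd_add, Pi.add_apply] <;> ring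

lemma tilde_sub (lam v : Wt m) : tilde m (lam - v) = tilde m lam - v := by
  ext <;> simp only [tilde, Prod.fst_sub, Prod.snd_sub, Pi.sub_apply] <;> ring

lemma tilde_add_smul_add_epsW (lam : Wt m) (c : ℚ) (l : Fin m) :
    tilde m (lam + c • (deltaW m + epsW l)) =
      ((tilde m lam).1 + c, Function.update (tilde m lam).2 l ((tilde m lam).2 l + c)) := by
  rw [tilde_add]
  ext j
  · simp [deltaW, epsW]
  · rcases eq_or_ne j l with rfl | hj <;> simp [deltaW, epsW, *]

lemma tilde_add_smul_sub_epsW (lam : Wt m) (c : ℚ) (l : Fin m) :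
    tilde m (lam + c • (deltaW m - epsW l)) =
      ((tilde m lam).1 + c, Function.update (tilde m lam).2 l ((tilde m lam).2 l - c)) := by
  rw [tilde_add]
  ext j
  · simp [deltaW, epsW]
  · rcases eq_or_ne j l with rfl | hj <;> simp [deltaW, epsW, *, sub_eq_add_neg]

lemma regular_iff_injective (lam : Wt m) :
    Regular m lam ↔ Function.Injective fun j => |(tilde m lam).2 j| :=
  Iff.rfl

namespace G0Dom

variable {lam : Wt m}

lemma tilde_snd_pos (h : G0Dom m lam) (j : Fin m) : 0 < (tilde m lam).2 j := by
  have hj : ((j : ℕ) : ℚ) + 1 ≤ m := by exact_mod_cast j.2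
  have := h.2 j
  simp only [tilde]
  linarith

lemma strictAnti_tilde_snd (h : G0Dom m lam) : StrictAnti (tilde m lam).2 := by
  intro i j hij
  have := h.1 i j hij.le
  have : ((i : ℕ) : ℚ) < (j : ℕ) := by exact_mod_cast hij
  simp only [tilde]
  linarith

end G0Dom

lemma IsPlus.tilde_fst {nu mu : Wt m} (h : IsPlus m nu mu) :
    (tilde m mu).1 = (tilde m nu).1 := by
  obtain ⟨-, w, hw⟩ := h
  rw [hw]; rfl

lemma IsPlus.isDescEnum {nu mu : Wt m} (h : IsPlus m nu mu) :
    IsDescEnum (Finset.univ.image fun j => |(tilde m nu).2 j|) (tilde m mu).2 := by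
  obtain ⟨hdom, w, hw⟩ := h
  have habs : (tilde m mu).2 = (fun j => |(tilde m nu).2 j|) ∘ w.1.symm := by
    funext j
    rw [← abs_of_pos (hdom.tilde_snd_pos j), hw]
    by_cases hb : w.2 j <;> simp [tact, hb, Equiv.Perm.inv_def]
  refine ⟨hdom.strictAnti_tilde_snd, ?_⟩
  rw [habs, ← Finset.image_image, Finset.image_univ_equiv]

end Weights

namespace IsDescEnum

variable {m : ℕ} {S : Finset ℚ} {A : ℚ} {f : Fin m → ℚ} {l : Fin m}

lemma mem_of_ne (hf : IsDescEnum (insert A S) f) (hl : f l = A) {j : Fin m} (hj : j ≠ l) :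
    f j ∈ S :=
  (Finset.mem_insert.1 (hf.mem j)).resolve_left fun h => hj (hf.1.injective (h.trans hl.symm))

lemma image_abs_update (hf : IsDescEnum (insert A S) f) (hA : A ∉ S) (hl : f l = A)
    (hS : ∀ y ∈ S, 0 < y) (x : ℚ) :
    Finset.univ.image (fun j => |Function.update f l x j|) = insert |x| S := by
  rw [← Finset.insert_erase (Finset.mem_univ l), Finset.image_insert, Function.update_self]
  congr 1
  have hoff : (Finset.univ.erase l).image (fun j => |Function.update f l x j|) =
      (Finset.univ.erase l).image f := by
    refine Finset.image_congr fun j hj => ?_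
    have hj : j ≠ l := Finset.ne_of_mem_erase hj
    simp only [Function.update_of_ne hj, abs_of_pos (hS _ (hf.mem_of_ne hl hj))]
  rw [hoff, Finset.image_erase hf.1.injective, hf.2, hl, Finset.erase_insert hA]

lemma injective_abs_update_iff (hf : IsDescEnum (insert A S) f) (hA : A ∉ S) (hl : f l = A)
    (hS : ∀ y ∈ S, 0 < y) (x : ℚ) :
    Function.Injective (fun j => |Function.update f l x j|) ↔ |x| ∉ S := by
  rw [← Set.injOn_univ, ← Finset.coe_univ, ← Finset.card_image_iff,
    hf.image_abs_update hA hl hS, Finset.card_univ, Fintype.card_fin, ← hf.card,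
    Finset.card_insert_of_notMem hA]
  constructor
  · intro h hx
    rw [Finset.card_insert_of_mem hx] at h
    omega
  · intro hx
    rw [Finset.card_insert_of_notMem hx]

end IsDescEnum

def HasProfile (m : ℕ) (S : Finset ℚ) (A : ℚ) (lam : Wt m) : Prop :=
  IsPosHalfInt A ∧ A ∉ S ∧ IsDescEnum (insert A S) (tilde m lam).2

namespace HasProfile

variable {m : ℕ} {S : Finset ℚ} {A : ℚ} {lam mu : Wt m}

lemma isPosHalfInt_tilde_snd (hS : ∀ x ∈ S, IsPosHalfInt x) (h : HasProfile m S A lam)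
    (j : Fin m) : IsPosHalfInt ((tilde m lam).2 j) := by
  rcases Finset.mem_insert.1 (h.2.2.mem j) with hj | hj
  · exact hj ▸ h.1
  · exact hS _ hj

lemma tilde_snd_add_one_le (hS : ∀ x ∈ S, IsPosHalfInt x) (h : HasProfile m S A lam)
    {i j : Fin m} (hij : i < j) : (tilde m lam).2 j + 1 ≤ (tilde m lam).2 i :=
  (h.isPosHalfInt_tilde_snd hS j).add_one_le_of_lt (h.isPosHalfInt_tilde_snd hS i) (h.2.2.1 hij)

lemma hat_of_tilde_fst_neg (hS : ∀ x ∈ S, IsPosHalfInt x)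
    (hmin : ∀ b, IsPosHalfInt b → b ∉ S → A ≤ b) (h : HasProfile m S A lam)
    (h1 : (tilde m lam).1 = -A) (hhat : IsHat m lam mu) :
    ∃ A₁, HasProfile m S A₁ mu ∧ (tilde m mu).1 = A₁ := by
  obtain ⟨γ, ⟨l, ⟨rfl, hl⟩ | ⟨rfl, hl⟩⟩, q, hq, hreg, -, hplus⟩ := hhat
  · linarith [(h.isPosHalfInt_tilde_snd hS l).pos, h.1.pos]
  obtain ⟨hA, hAS, hf⟩ := h
  have hSpos : ∀ y ∈ S, 0 < y := fun y hy => (hS y hy).pos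
  rw [h1, neg_inj] at hl
  have hfst := hplus.tilde_fst
  have henum := hplus.isDescEnum
  rw [regular_iff_injective] at hreg
  rw [tilde_add_smul_sub_epsW, ← hl] at hfst henum hreg
  rw [hf.injective_abs_update_iff hAS hl.symm hSpos] at hreg
  rw [hf.image_abs_update hAS hl.symm hSpos] at henum
  have hAq : A ≤ q := by
    by_contra hqA
    have hq' : (0 : ℚ) < q := by exact_mod_cast hq
    have := hmin _ (hA.abs_sub_natCast q) hreg
    rw [abs_of_pos (by linarith)] at this
    linarith
  refine ⟨|A - q|, ⟨hA.abs_sub_natCast q, hreg, henum⟩, ?_⟩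
  rw [hfst, h1, abs_of_nonpos (by linarith)]
  ring

lemma hat_of_tilde_fst_pos (hS : ∀ x ∈ S, IsPosHalfInt x) (h : HasProfile m S A lam)
    (h1 : (tilde m lam).1 = A) (hhat : IsHat m lam mu) :
    ∃ A', A < A' ∧ (∀ x, IsPosHalfInt x → A < x → x < A' → x ∈ S) ∧
      HasProfile m S A' mu ∧ (tilde m mu).1 = A' := by
  obtain ⟨γ, ⟨l, ⟨rfl, hl⟩ | ⟨rfl, hl⟩⟩, q, hq, hreg, hminreg, hplus⟩ := hhat
  swap
  · linarith [(h.isPosHalfInt_tilde_snd hS l).pos, h.1.pos]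
  obtain ⟨hA, hAS, hf⟩ := h
  have hSpos : ∀ y ∈ S, 0 < y := fun y hy => (hS y hy).pos
  rw [h1] at hl
  have hreg_iff : ∀ b : ℕ, Regular m (lam + (b : ℚ) • (deltaW m + epsW l)) ↔ A + b ∉ S := by
    intro b
    rw [regular_iff_injective, tilde_add_smul_add_epsW, ← hl,
      hf.injective_abs_update_iff hAS hl.symm hSpos, abs_of_pos (hA.add_natCast b).pos]
  have henum := hplus.isDescEnum
  rw [tilde_add_smul_add_epsW, ← hl, hf.image_abs_update hAS hl.symm hSpos,
    abs_of_pos (hA.add_natCast q).pos] at henum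
  have hq' : (0 : ℚ) < q := by exact_mod_cast hq
  refine ⟨A + q, by linarith, fun x hx hAx hxA' => ?_,
    ⟨hA.add_natCast q, (hreg_iff q).1 hreg, henum⟩, ?_⟩
  · obtain ⟨b, hb⟩ := hx.exists_natCast_eq_sub hA hAx.le
    have hb0 : 0 < b := by exact_mod_cast (by linarith : (0 : ℚ) < b)
    have hbq : b < q := by exact_mod_cast (by linarith : (b : ℚ) < q)
    have := hminreg b hb0 hbq
    rwa [hreg_iff, not_not, ← hb, add_sub_cancel] at this
  · rw [hplus.tilde_fst, tilde_add_smul_add_epsW, h1]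

end HasProfile

section Multiplicity

variable {m : ℕ}

def oddShift (m : ℕ) (lam : Wt m) (p : ℕ) (T : Finset (Wt m)) : Wt m :=
  lam - T.sum id - ((2 * p : ℕ) : ℚ) • deltaW m

lemma bmult_eq_sgn_of_unique {lam mu : Wt m} {p₀ : ℕ} {T₀ : Finset (Wt m)} {w₀ : W0T m}
    (hT₀ : T₀ ⊆ Delta1 m) (hreg : Regular m (oddShift m lam p₀ T₀))
    (heq : tilde m (oddShift m lam p₀ T₀) = tact m w₀ (tilde m mu))
    (huniq : ∀ p T w, T ⊆ Delta1 m →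
      tilde m (oddShift m lam p T) = tact m w (tilde m mu) → p = p₀ ∧ T = T₀ ∧ w = w₀) :
    bmult m lam mu = sgn m w₀ := by
  classical
  have hzero : ∀ p T w, T ⊆ Delta1 m → ¬(p = p₀ ∧ T = T₀ ∧ w = w₀) →
      (if Regular m (oddShift m lam p T) ∧ tilde m (oddShift m lam p T) = tact m w (tilde m mu)
        then sgn m w else 0) = 0 :=
    fun p T w hT hne => if_neg fun h => hne (huniq p T w hT h.2)
  rw [bmult, finsum_eq_single _ p₀ fun p hp => ?_,
    Finset.sum_eq_single_of_mem T₀ (Finset.mem_powerset.2 hT₀) fun T hT hne => ?_,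
    Fintype.sum_eq_single w₀ fun w hw => ?_]
  · exact if_pos ⟨hreg, heq⟩
  · exact hzero p₀ T₀ w hT₀ fun h => hw h.2.2
  · exact Finset.sum_eq_zero fun w _ => hzero p₀ T w (Finset.mem_powerset.1 hT) fun h => hne h.2.1
  · exact Finset.sum_eq_zero fun T hT => Finset.sum_eq_zero fun w _ =>
      hzero p T w (Finset.mem_powerset.1 hT) fun h => hp h.1

end Multiplicity

section Roots

variable {m : ℕ}

def plusRoot (i : Fin m) : Wt m := deltaW m + epsW i

lemma plusRoot_snd (i j : Fin m) : (plusRoot i).2 j = if i = j then 1 else 0 := by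
  simp [plusRoot, deltaW, epsW, Pi.single_apply, eq_comm]

lemma plusRoot_injective : Function.Injective (plusRoot (m := m)) := by
  intro i j h
  by_contra hij
  have := congrArg (fun β : Wt m => β.2 i) h
  simp [plusRoot_snd, Ne.symm hij] at this

lemma plusRoot_mem_Delta1 (i : Fin m) : plusRoot i ∈ Delta1 m := by
  simp [Delta1, plusRoot]

lemma sum_snd_image_plusRoot (J : Finset (Fin m)) (j : Fin m) :
    ∑ β ∈ J.image plusRoot, β.2 j = if j ∈ J then 1 else 0 := by
  rw [Finset.sum_image fun i _ k _ h => plusRoot_injective h]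
  simp [plusRoot_snd]

lemma fst_of_mem_Delta1 {β : Wt m} (hβ : β ∈ Delta1 m) : β.1 = 1 := by
  simp only [Delta1, Finset.mem_union, Finset.mem_singleton, Finset.mem_image,
    Finset.mem_univ, true_and] at hβ
  rcases hβ with (rfl | ⟨i, rfl⟩) | ⟨i, rfl⟩ <;> simp [deltaW, epsW]

lemma sum_snd_le_one_of_mem_Delta1 {β : Wt m} (hβ : β ∈ Delta1 m) :
    ∑ j, β.2 j ≤ 1 ∧ (∑ j, β.2 j = 1 → ∃ i, β = plusRoot i) := by
  simp only [Delta1, Finset.mem_union, Finset.mem_singleton, Finset.mem_image,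
    Finset.mem_univ, true_and] at hβ
  rcases hβ with (rfl | ⟨i, rfl⟩) | ⟨i, rfl⟩
  · simp [deltaW]
  · exact ⟨by simp [deltaW, epsW], fun _ => ⟨i, rfl⟩⟩
  · have : ∑ j, (deltaW m - epsW i).2 j = -1 := by simp [deltaW, epsW]
    rw [this]
    norm_num

lemma tilde_oddShift_fst {lam : Wt m} {T : Finset (Wt m)} (hT : T ⊆ Delta1 m) (p : ℕ) :
    (tilde m (oddShift m lam p T)).1 = (tilde m lam).1 - T.card - 2 * p := by
  have hT1 : (∑ β ∈ T, β).1 = T.card := by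
    rw [Prod.fst_sum, Finset.sum_congr rfl fun β hβ => fst_of_mem_Delta1 (hT hβ)]
    simp
  simp [oddShift, tilde_sub, hT1, deltaW]

lemma tilde_oddShift_snd (lam : Wt m) (T : Finset (Wt m)) (p : ℕ) (j : Fin m) :
    (tilde m (oddShift m lam p T)).2 j = (tilde m lam).2 j - ∑ β ∈ T, β.2 j := by
  simp [oddShift, tilde_sub, Prod.snd_sum, deltaW]

end Roots

section SignedPermutations

variable {m : ℕ} {v : Wt m}

lemma tact_snd_le (hv : ∀ j, 0 < v.2 j) (w : W0T m) (j : Fin m) :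
    (tact m w v).2 j ≤ v.2 (w.1⁻¹ j) := by
  by_cases hw : w.2 j
  · simp only [tact, hw, if_true, neg_one_mul]
    linarith [hv (w.1⁻¹ j)]
  · simp [tact, hw]

lemma sum_tact_snd_le (hv : ∀ j, 0 < v.2 j) (w : W0T m) :
    ∑ j, (tact m w v).2 j ≤ ∑ j, v.2 j :=
  (Finset.sum_le_sum fun j _ => tact_snd_le hv w j).trans_eq (Equiv.sum_comp w.1⁻¹ v.2)

lemma eq_false_of_sum_tact_snd_eq (hv : ∀ j, 0 < v.2 j) {w : W0T m}
    (h : ∑ j, (tact m w v).2 j = ∑ j, v.2 j) (j : Fin m) : w.2 j = false := by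
  rw [← Equiv.sum_comp w.1⁻¹ v.2,
    Finset.sum_eq_sum_iff_of_le fun j _ => tact_snd_le hv w j] at h
  have hj := h j (Finset.mem_univ j)
  have := hv (w.1⁻¹ j)
  by_contra hw
  simp only [tact, Bool.not_eq_false] at hw hj
  simp only [hw, if_true] at hj
  linarith

lemma tact_one_false (v : Wt m) : tact m (1, fun _ => false) v = v := by
  simp [tact]

lemma sgn_one_false : sgn m (1, fun _ => false) = 1 := by
  simp [sgn]

end SignedPermutations

lemma rigid_of_tilde_oddShift_eq_tact {m : ℕ} {lam mu : Wt m} {p : ℕ} {T : Finset (Wt m)}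
    {w : W0T m} (hu : ∀ j, 0 < (tilde m mu).2 j)
    (hsum : ∑ j, (tilde m lam).2 j - ∑ j, (tilde m mu).2 j = (tilde m lam).1 - (tilde m mu).1)
    (hT : T ⊆ Delta1 m) (h : tilde m (oddShift m lam p T) = tact m w (tilde m mu)) :
    p = 0 ∧ (∀ β ∈ T, ∃ i, β = plusRoot i) ∧ ∀ j, w.2 j = false := by
  have hfst : (tilde m lam).1 - T.card - 2 * p = (tilde m mu).1 := by
    rw [← tilde_oddShift_fst hT p, h]
    rfl
  have hsnd : ∑ j, (tilde m lam).2 j - ∑ β ∈ T, ∑ j, β.2 j = ∑ j, (tact m w (tilde m mu)).2 j := by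
    rw [← h, Finset.sum_comm, ← Finset.sum_sub_distrib]
    exact Finset.sum_congr rfl fun j _ => (tilde_oddShift_snd lam T p j).symm
  have hheight : ∑ β ∈ T, ∑ j, β.2 j ≤ ∑ β ∈ T, (1 : ℚ) :=
    Finset.sum_le_sum fun β hβ => (sum_snd_le_one_of_mem_Delta1 (hT hβ)).1
  have hsign := sum_tact_snd_le hu w
  rw [Finset.sum_const, nsmul_one] at hheight
  have hp : (p : ℚ) = 0 := by linarith [(Nat.cast_nonneg p : (0 : ℚ) ≤ p)]
  have hheight_eq : ∑ β ∈ T, ∑ j, β.2 j = ∑ β ∈ T, (1 : ℚ) := by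
    rw [Finset.sum_const, nsmul_one]
    linarith
  refine ⟨by exact_mod_cast hp, fun β hβ => ?_, eq_false_of_sum_tact_snd_eq hu (by linarith)⟩
  refine (sum_snd_le_one_of_mem_Delta1 (hT hβ)).2 ?_
  exact (Finset.sum_eq_sum_iff_of_le fun β hβ => (sum_snd_le_one_of_mem_Delta1 (hT hβ)).1).1
    hheight_eq β hβ

lemma strictAnti_sub_indicator {m : ℕ} {f : Fin m → ℚ} (hgap : ∀ ⦃i j⦄, i < j → f j + 1 ≤ f i)
    (P : Fin m → Prop) [DecidablePred P]
    (hinj : Function.Injective fun j => f j - if P j then 1 else 0) :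
    StrictAnti fun j => f j - if P j then 1 else 0 := by
  refine Antitone.strictAnti_of_injective (fun i j hij => ?_) hinj
  rcases hij.lt_or_eq with hij | rfl
  · have := hgap hij
    split_ifs <;> linarith
  · rfl

section LowerIoc

variable {m : ℕ} {S : Finset ℚ} {A A' : ℚ} {f : Fin m → ℚ}

/-- The entries in `(A, A']` are lowered into `[A, A' - 1]`, the others stay outside `[A, A']`. -/
lemma injective_sub_indicator_Ioc (hf : Function.Injective f) (hA : IsPosHalfInt A)
    (hhalf : ∀ j, IsPosHalfInt (f j)) (hfA : ∀ j, f j ≠ A) :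
    Function.Injective fun j => f j - if A < f j ∧ f j ≤ A' then 1 else 0 := by
  have hband : ∀ j, (A < f j ∧ f j ≤ A') ↔
      A ≤ f j - (if A < f j ∧ f j ≤ A' then 1 else 0) ∧
        f j - (if A < f j ∧ f j ≤ A' then 1 else 0) ≤ A' := by
    intro j
    by_cases hj : A < f j ∧ f j ≤ A'
    · simp only [hj, and_self, if_true, true_iff]
      constructor <;> linarith [hA.add_one_le_of_lt (hhalf j) hj.1]
    · simp only [hj, if_false, sub_zero, false_iff]
      exact fun h => hj ⟨lt_of_le_of_ne h.1 (hfA j).symm, h.2⟩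
  intro i j hij
  have hij' : f i - (if A < f i ∧ f i ≤ A' then 1 else 0) =
      f j - (if A < f j ∧ f j ≤ A' then 1 else 0) := hij
  have hiff : (A < f i ∧ f i ≤ A') ↔ (A < f j ∧ f j ≤ A') := by
    rw [hband i, hband j, hij']
  simp only [hiff] at hij'
  exact hf (sub_left_injective hij')

lemma sub_indicator_Ioc_mem (hf : ∀ j, f j ∈ insert A' S) (hA : IsPosHalfInt A)
    (hhalf : ∀ j, IsPosHalfInt (f j)) (hlt : A < A')
    (hbet : ∀ x, IsPosHalfInt x → A < x → x < A' → x ∈ S) (j : Fin m) :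
    f j - (if A < f j ∧ f j ≤ A' then 1 else 0) ∈ insert A S := by
  by_cases hj : A < f j ∧ f j ≤ A'
  · rw [if_pos hj]
    rcases (hA.add_one_le_of_lt (hhalf j) hj.1).eq_or_lt with h | h
    · rw [← h, add_sub_cancel_right]
      exact Finset.mem_insert_self A S
    · refine Finset.mem_insert_of_mem (hbet _ ?_ (by linarith) (by linarith [hj.2]))
      exact (hhalf j).sub_one (by linarith [hA.pos])
  · rw [if_neg hj, sub_zero]
    rcases Finset.mem_insert.1 (hf j) with h | h
    · exact absurd ⟨h ▸ hlt, h.le⟩ hj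
    · exact Finset.mem_insert_of_mem h

end LowerIoc

namespace HasProfile

variable {m : ℕ} {S : Finset ℚ} {A A' : ℚ} {lam mu : Wt m}

lemma sum_tilde_snd (h : HasProfile m S A lam) : ∑ j, (tilde m lam).2 j = A + ∑ x ∈ S, x := by
  rw [h.2.2.sum_eq, Finset.sum_insert h.2.1]

lemma tilde_snd_sub_indicator_Ioc_eq (hS : ∀ x ∈ S, IsPosHalfInt x)
    (hlam : HasProfile m S A' lam) (hmu : HasProfile m S A mu) (hlt : A < A')
    (hbet : ∀ x, IsPosHalfInt x → A < x → x < A' → x ∈ S) :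
    (fun j => (tilde m lam).2 j -
        if A < (tilde m lam).2 j ∧ (tilde m lam).2 j ≤ A' then 1 else 0) = (tilde m mu).2 := by
  have hfA : ∀ j, (tilde m lam).2 j ≠ A := fun j hj =>
    (Finset.mem_insert.1 (hj ▸ hlam.2.2.mem j)).elim hlt.ne hmu.2.1
  have hinj := injective_sub_indicator_Ioc (A' := A') hlam.2.2.1.injective hmu.1
    (hlam.isPosHalfInt_tilde_snd hS) hfA
  exact hmu.2.2.eq_of_strictAnti
    (strictAnti_sub_indicator (fun i j => hlam.tilde_snd_add_one_le hS) _ hinj)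
    (sub_indicator_Ioc_mem hlam.2.2.mem hmu.1 (hlam.isPosHalfInt_tilde_snd hS) hlt hbet)

lemma tilde_snd_sub_indicator_eq_of_perm (hS : ∀ x ∈ S, IsPosHalfInt x)
    (hlam : HasProfile m S A' lam) (hmu : HasProfile m S A mu) {J : Finset (Fin m)}
    {σ : Equiv.Perm (Fin m)}
    (h : ∀ j, (tilde m lam).2 j - (if j ∈ J then 1 else 0) = (tilde m mu).2 (σ j)) :
    (fun j => (tilde m lam).2 j - if j ∈ J then 1 else 0) = (tilde m mu).2 := by
  have hinj : Function.Injective fun j => (tilde m lam).2 j - if j ∈ J then 1 else 0 :=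
    fun i j hij => σ.injective (hmu.2.2.1.injective (by simpa only [h] using hij))
  exact hmu.2.2.eq_of_strictAnti
    (strictAnti_sub_indicator (fun i j => hlam.tilde_snd_add_one_le hS) (· ∈ J) hinj)
    fun j => h j ▸ hmu.2.2.mem (σ j)

lemma eq_of_tilde_oddShift_eq_tact (hS : ∀ x ∈ S, IsPosHalfInt x)
    (hlam : HasProfile m S A' lam) (hlam₁ : (tilde m lam).1 = A')
    (hmu : HasProfile m S A mu) (hmu₁ : (tilde m mu).1 = A)
    {p : ℕ} {T : Finset (Wt m)} {w : W0T m} (hT : T ⊆ Delta1 m)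
    (h : tilde m (oddShift m lam p T) = tact m w (tilde m mu)) :
    p = 0 ∧ w = (1, fun _ => false) ∧ ∃ J : Finset (Fin m), T = J.image plusRoot ∧
      (fun j => (tilde m lam).2 j - if j ∈ J then 1 else 0) = (tilde m mu).2 := by
  have hsum : ∑ j, (tilde m lam).2 j - ∑ j, (tilde m mu).2 j =
      (tilde m lam).1 - (tilde m mu).1 := by
    rw [hlam.sum_tilde_snd, hmu.sum_tilde_snd, hlam₁, hmu₁]
    ring
  obtain ⟨rfl, hroots, hsign⟩ := rigid_of_tilde_oddShift_eq_tact
    (fun j => (hmu.isPosHalfInt_tilde_snd hS j).pos) hsum hT h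
  obtain ⟨J, -, rfl⟩ := Finset.subset_image_iff.1 fun β hβ => by
    obtain ⟨i, rfl⟩ := hroots β hβ
    exact Finset.mem_image_of_mem plusRoot (Finset.mem_univ i)
  have hcoord : ∀ j, (tilde m lam).2 j - (if j ∈ J then 1 else 0) = (tilde m mu).2 (w.1⁻¹ j) := by
    intro j
    have := congrFun (congrArg Prod.snd h) j
    rw [tilde_oddShift_snd, sum_snd_image_plusRoot] at this
    simpa [tact, hsign j] using this
  have hshift := hlam.tilde_snd_sub_indicator_eq_of_perm hS hmu hcoord
  have hperm : w.1⁻¹ = 1 := Equiv.ext fun j =>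
    hmu.2.2.1.injective ((hcoord j).symm.trans (congrFun hshift j))
  exact ⟨rfl, Prod.ext (inv_eq_one.1 hperm) (funext hsign), J, rfl, hshift⟩

end HasProfile

theorem bmult_eq_one_of_hasProfile {m : ℕ} {S : Finset ℚ} {A A' : ℚ} {lam mu : Wt m}
    (hS : ∀ x ∈ S, IsPosHalfInt x)
    (hlam : HasProfile m S A' lam) (hlam₁ : (tilde m lam).1 = A')
    (hmu : HasProfile m S A mu) (hmu₁ : (tilde m mu).1 = A) (hlt : A < A')
    (hbet : ∀ x, IsPosHalfInt x → A < x → x < A' → x ∈ S) :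
    bmult m lam mu = 1 := by
  set J₀ := Finset.univ.filter fun j => A < (tilde m lam).2 j ∧ (tilde m lam).2 j ≤ A'
  have hJ₀ : ∀ j, j ∈ J₀ ↔ A < (tilde m lam).2 j ∧ (tilde m lam).2 j ≤ A' := by simp [J₀]
  have hshift := hlam.tilde_snd_sub_indicator_Ioc_eq hS hmu hlt hbet
  have hcard : (J₀.card : ℚ) = A' - A := by
    have := congrArg (fun g => ∑ j, g j) hshift
    simp only [Finset.sum_sub_distrib, Finset.sum_boole, hlam.sum_tilde_snd,
      hmu.sum_tilde_snd] at this
    linarith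
  have hT₀ : J₀.image plusRoot ⊆ Delta1 m := fun β hβ => by
    obtain ⟨i, -, rfl⟩ := Finset.mem_image.1 hβ
    exact plusRoot_mem_Delta1 i
  have hexist : tilde m (oddShift m lam 0 (J₀.image plusRoot)) =
      tact m (1, fun _ => false) (tilde m mu) := by
    rw [tact_one_false]
    refine Prod.ext ?_ (funext fun j => ?_)
    · rw [tilde_oddShift_fst hT₀, Finset.card_image_of_injective _ plusRoot_injective, hcard,
        hlam₁, hmu₁]
      ring
    · rw [tilde_oddShift_snd, sum_snd_image_plusRoot, if_congr (hJ₀ j) rfl rfl]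
      exact congrFun hshift j
  refine (bmult_eq_sgn_of_unique hT₀ ?_ hexist fun p T w hT h => ?_).trans sgn_one_false
  · rw [regular_iff_injective, hexist, tact_one_false]
    intro i j hij
    simp only [abs_of_pos (hmu.isPosHalfInt_tilde_snd hS _).pos] at hij
    exact hmu.2.2.1.injective hij
  · obtain ⟨rfl, rfl, J, rfl, hJ⟩ := hlam.eq_of_tilde_oddShift_eq_tact hS hlam₁ hmu hmu₁ hT h
    refine ⟨rfl, congrArg _ (Finset.ext fun j => ?_), rfl⟩
    have hind := sub_right_injective (congrFun (hJ.trans hshift.symm) j)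
    rw [hJ₀]
    split_ifs at hind with hj hj₀ hj₀ <;> simp_all

theorem bmult_consecutive_eq_one_general (m : ℕ)
    (S : Finset ℚ)
    (hS : ∀ x ∈ S, ∃ n : ℕ, x = (n : ℚ) + 1 / 2)
    (a : ℚ) (ha : ∃ n : ℕ, a = (n : ℚ) + 1 / 2) (haS : a ∉ S)
    (hmin : ∀ b : ℚ, (∃ n : ℕ, b = (n : ℚ) + 1 / 2) → b ∉ S → a ≤ b)
    (lamSeq : ℕ → Wt m)
    (h1 : (tilde m (lamSeq 0)).1 = -a)
    (h2 : (Finset.univ.image fun i => (tilde m (lamSeq 0)).2 i) = insert a S)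
    (h3 : ∀ i j : Fin m, i < j →
      (tilde m (lamSeq 0)).2 j < (tilde m (lamSeq 0)).2 i)
    (hhat : ∀ i : ℕ, IsHat m (lamSeq i) (lamSeq (i + 1))) :
    ∀ i : ℕ, 2 ≤ i → bmult m (lamSeq i) (lamSeq (i - 1)) = 1 := by
  have hprofile : ∀ k, ∃ A, HasProfile m S A (lamSeq (k + 1)) ∧ (tilde m (lamSeq (k + 1))).1 = A := by
    intro k
    induction k with
    | zero =>
      have hprofile₀ : HasProfile m S a (lamSeq 0) := ⟨ha, haS, fun i j hij => h3 i j hij, h2⟩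
      exact hprofile₀.hat_of_tilde_fst_neg hS hmin h1 (hhat 0)
    | succ k ih =>
      obtain ⟨A, hA, hA₁⟩ := ih
      obtain ⟨A', -, -, hA', hA'₁⟩ := hA.hat_of_tilde_fst_pos hS hA₁ (hhat (k + 1))
      exact ⟨A', hA', hA'₁⟩
  intro i hi
  obtain ⟨k, rfl⟩ : ∃ k, i = k + 2 := ⟨i - 2, by omega⟩
  obtain ⟨A, hA, hA₁⟩ := hprofile k
  obtain ⟨A', hlt, hbet, hA', hA'₁⟩ := hA.hat_of_tilde_fst_pos hS hA₁ (hhat (k + 1))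
  exact bmult_eq_one_of_hasProfile hS hA' hA'₁ hA hA₁ hlt hbet

/-- the computation `b_{λ⁽ⁱ⁾,λ⁽ⁱ⁻¹⁾} = 1` in the proof of
Theorem 3.10 for `k = 2m+1`: with `λ⁽⁰⁾` as in the context (atypicality type
`S`, `λ̃⁽⁰⁾ = (−a | S ∪ {a} in decreasing order)`) and `λ⁽ⁱ⁾ = (λ⁽ⁱ⁻¹⁾)^`,
one has `b(λ⁽ⁱ⁾, λ⁽ⁱ⁻¹⁾) = 1` for every `i ≥ 2`. -/
theorem bmult_consecutive_eq_one (m : ℕ) (hm : 1 ≤ m)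
    (S : Finset ℚ) (hcard : S.card = m - 1)
    (hS : ∀ x ∈ S, ∃ n : ℕ, x = (n : ℚ) + 1 / 2)
    (a : ℚ) (ha : ∃ n : ℕ, a = (n : ℚ) + 1 / 2) (haS : a ∉ S)
    (hmin : ∀ b : ℚ, (∃ n : ℕ, b = (n : ℚ) + 1 / 2) → b ∉ S → a ≤ b)
    (lamSeq : ℕ → Wt m)
    (h1 : (tilde m (lamSeq 0)).1 = -a)
    (h2 : (Finset.univ.image fun i => (tilde m (lamSeq 0)).2 i) = insert a S)
    (h3 : ∀ i j : Fin m, i < j →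
      (tilde m (lamSeq 0)).2 j < (tilde m (lamSeq 0)).2 i)
    (hhat : ∀ i : ℕ, IsHat m (lamSeq i) (lamSeq (i + 1))) :
    ∀ i : ℕ, 2 ≤ i → bmult m (lamSeq i) (lamSeq (i - 1)) = 1 :=
  bmult_consecutive_eq_one_general m S hS a ha haS hmin lamSeq h1 h2 h3 hhat
end
end
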